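/- arXiv:1203.1235 — 2 statements merged into one kernel-verified Lean document; each statement's English description precedes it below -/
import Mathlib

section
/- For every countable ordinal ξ, if g is a finite strictly increasing partial function from ω₁ to ω₁ with ξ in its domain, rank(g(ζ), g(ζ)) ≥ ζ for every ζ in the domain of g, and ξ₀ = max(dom(g) ∩ ξ) exists, then there is a strictly increasing continuous function h : [ξ₀, ξ] → [g(ξ₀), g(ξ)] with h(ξ₀) = g(ξ₀) and h(ξ) = g(ξ). -/
noncomputable section

open Set

/-- The first uncountable ordinal. -/
def omega1 : Ordinal := (Cardinal.aleph 1).ord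

/-- `δ` is a limit point of the set of ordinals `X`. -/
def IsLimitPointOf (X : Set Ordinal) (δ : Ordinal) : Prop :=
  ∀ β < δ, ∃ ε ∈ X, β < ε ∧ ε < δ

/-- `rankGE X δ μ` says that the Cantor–Bendixson rank of `δ` with respect to `X`
is at least `μ`:  `rank(X, δ) ≥ 1` iff `δ` is a limit point of `X`, and for `μ > 1`,
`rank(X, δ) ≥ μ` iff for every `η < μ`, `δ` is a limit of ordinals `ε` with
`rank(X, ε) ≥ η`. -/
def rankGE (X : Set Ordinal) (δ μ : Ordinal) : Prop :=
  ∀ η : Ordinal, η < μ →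
    ((η = 0 → IsLimitPointOf X δ) ∧
     (η ≠ 0 → ∀ β < δ, ∃ ε, β < ε ∧ ε < δ ∧ rankGE X ε η))
termination_by μ
decreasing_by assumption

/-- A club (closed unbounded) subset of `ω₁`. -/
def IsClubW1 (C : Set Ordinal) : Prop :=
  C ⊆ Set.Iio omega1 ∧ (∀ α < omega1, ∃ β ∈ C, α < β) ∧
    (∀ δ, δ < omega1 → IsLimitPointOf C δ → δ ∈ C)

/-- A ladder system on `ω₁`: each countable limit ordinal `δ` gets a cofinal subset
`A δ ⊆ δ` of order type `ω`. -/
def IsLadder (A : Ordinal → Set Ordinal) : Prop :=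
  ∀ δ, δ < omega1 → Order.IsSuccLimit δ →
    A δ ⊆ Set.Iio δ ∧ (∀ β < δ, ∃ γ ∈ A δ, β < γ) ∧ (A δ).Infinite ∧
      ∀ x < δ, (A δ ∩ Set.Iio x).Finite

/-- A normal (strictly increasing and continuous) function on the ordinals below `ω₁`. -/
def IsNormalW1 (F : Ordinal → Ordinal) : Prop :=
  (∀ α, α < omega1 → F α < omega1) ∧
  (∀ α β, α < β → β < omega1 → F α < F β) ∧
  (∀ δ, δ < omega1 → Order.IsSuccLimit δ → F δ = sSup (F '' Set.Iio δ))

/-- An (additively) indecomposable nonzero ordinal. -/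
def Indecomposable (δ : Ordinal) : Prop :=
  0 < δ ∧ ∀ β < δ, ∀ γ < δ, β + γ < δ

/-!
Rank at least `ξ` of `δ` inside `Iio δ` forces `ω ^ ξ ∣ δ`, hence `d + ω ^ ζ < δ` for all `d < δ`
and `ζ < ξ`; and `ζ ↦ d + ω ^ ζ` is normal. If `ξ` is a successor, `h ζ = g ξ₀ + ω ^ ζ` on
`(ξ₀, ξ)` works. If `ξ` is a limit, cut `(ξ₀, ξ)` into blocks `(z n, z (n + 1)]` along a cofinal
sequence and put `h ζ = d n + ω ^ ζ` on the `n`-th block, where `d` is cofinal in `δ` with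
`d 0 = g ξ₀` and `d n + ω ^ z (n + 1) ≤ d (n + 1)`; countability of `ξ` and `δ` provides both
sequences, and makes `h` continuous at `ξ`.
-/

universe u v w

open Ordinal Order

theorem rankGE_of_le {X : Set Ordinal} {ε μ η : Ordinal} (h : rankGE X ε μ) (hη : η ≤ μ) :
    rankGE X ε η := by
  rw [rankGE] at h ⊢
  exact fun ν hν => h ν (hν.trans_le hη)

theorem exists_rankGE_of_rankGE_succ {X : Set Ordinal} {ε η : Ordinal}
    (h : rankGE X ε (succ η)) : ∀ β < ε, ∃ ε', β < ε' ∧ ε' < ε ∧ rankGE X ε' η := by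
  rw [rankGE] at h
  obtain ⟨h_zero, h_ne_zero⟩ := h η (lt_succ η)
  intro β hβ
  rcases eq_or_ne η 0 with rfl | hη
  · obtain ⟨ε', -, hβε', hε'ε⟩ := h_zero rfl β hβ
    refine ⟨ε', hβε', hε'ε, ?_⟩
    rw [rankGE]
    exact fun ν hν => absurd hν (zero_le (a := ν)).not_gt
  · exact h_ne_zero hη β hβ

theorem Ordinal.mul_omega0_dvd_of_forall_exists_dvd {a ε : Ordinal} (ha : a ≠ 0)
    (h : ∀ β < ε, ∃ ε', β < ε' ∧ ε' < ε ∧ a ∣ ε') : a * ω ∣ ε := by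
  have succ_mul_lt : ∀ j, a * j < ε → a * succ j < ε := by
    intro j hj
    obtain ⟨_, hjm, hmε, m, rfl⟩ := h _ hj
    have : succ j ≤ m := succ_le_of_lt ((mul_lt_mul_iff_right₀ (pos_iff_ne_zero.2 ha)).1 hjm)
    exact (mul_le_mul_right this a).trans_lt hmε
  have hε : a * (ε / a) = ε := by
    refine (mul_div_le ε a).eq_of_not_lt fun hlt => ?_
    exact (succ_mul_lt _ hlt).not_gt (lt_mul_succ_div ε ha)
  have hprelimit : IsSuccPrelimit (ε / a) := by
    refine isSuccPrelimit_iff_succ_ne.2 fun j hj => ?_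
    have hlt : a * j < ε := by
      rw [← hε, ← hj]
      exact (mul_lt_mul_iff_right₀ (pos_iff_ne_zero.2 ha)).2 (lt_succ j)
    exact (succ_mul_lt j hlt).ne (by rw [hj, hε])
  rw [← hε]
  exact mul_dvd_mul_left a (isSuccPrelimit_iff_omega0_dvd.1 hprelimit)

theorem Ordinal.omega0_opow_dvd_of_isSuccLimit {μ ε : Ordinal} (hμ : IsSuccLimit μ)
    (h : ∀ η < μ, ω ^ η ∣ ε) : ω ^ μ ∣ ε := by
  rw [dvd_iff_mod_eq_zero]
  by_contra hne
  obtain ⟨η, hημ, hlt⟩ := (lt_opow_of_isSuccLimit omega0_ne_zero hμ).1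
    (mod_lt ε (opow_ne_zero μ omega0_ne_zero))
  have hdvd : ω ^ η ∣ ε % ω ^ μ :=
    (dvd_add_iff ((opow_dvd_opow ω hημ.le).mul_right _)).1 (by rw [div_add_mod]; exact h η hημ)
  exact (le_of_dvd hne hdvd).not_gt hlt

theorem omega0_opow_dvd_of_rankGE {X : Set Ordinal.{v}} {ε : Ordinal.{v}} {μ : Ordinal.{u}}
    (h : rankGE X ε μ) : ω ^ lift.{v} μ ∣ lift.{u} ε := by
  induction μ using WellFoundedLT.induction generalizing ε with
  | _ μ ih =>
  rcases zero_or_succ_or_isSuccLimit μ with rfl | ⟨η, rfl⟩ | hμ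
  · simp
  · rw [lift_succ, opow_succ]
    refine mul_omega0_dvd_of_forall_exists_dvd (opow_ne_zero _ omega0_ne_zero) fun β hβ => ?_
    obtain ⟨β, -, rfl⟩ := lt_lift_iff.1 hβ
    obtain ⟨ε', hβε', hε'ε, hrank⟩ := exists_rankGE_of_rankGE_succ h β (lift_lt.1 hβ)
    exact ⟨lift ε', lift_lt.2 hβε', lift_lt.2 hε'ε, ih η (lt_succ η) hrank⟩
  · refine omega0_opow_dvd_of_isSuccLimit (isSuccLimit_lift.2 hμ) fun ρ hρ => ?_
    obtain ⟨η, hημ, rfl⟩ := lt_lift_iff.1 hρ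
    exact ih η hημ (rankGE_of_le h hημ.le)

theorem Ordinal.add_omega0_opow_le_of_dvd {ξ δ d : Ordinal} (hdvd : ω ^ ξ ∣ δ) (hd : d < δ) :
    d + ω ^ ξ ≤ δ := by
  obtain ⟨c, rfl⟩ := hdvd
  have hpos : ω ^ ξ ≠ 0 := opow_ne_zero ξ omega0_ne_zero
  calc d + ω ^ ξ = ω ^ ξ * (d / ω ^ ξ) + (d % ω ^ ξ + ω ^ ξ) := by rw [← add_assoc, div_add_mod]
    _ = ω ^ ξ * succ (d / ω ^ ξ) := by
        rw [add_of_omega0_opow_le (mod_lt d hpos) le_rfl, mul_succ]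
    _ ≤ ω ^ ξ * c := mul_le_mul_right (succ_le_of_lt ((lt_mul_iff_div_lt hpos).1 hd)) _

theorem lift_omega1 : lift.{v} omega1.{u} = omega1.{max u v} := by
  rw [omega1, omega1, Cardinal.lift_ord, Cardinal.lift_aleph, lift_one]

theorem countable_Iio_of_lt_omega1 {o : Ordinal} (ho : o < omega1) : (Iio o).Countable := by
  rw [← Cardinal.le_aleph0_iff_set_countable, Cardinal.mk_Iio_ordinal, Cardinal.lift_le_aleph0,
    ← Cardinal.lt_aleph_one_iff, ← Cardinal.lt_ord]
  exact ho

theorem Ordinal.exists_seq_cofinal {o x₀ : Ordinal} (ho : (Iio o).Countable) (hx₀ : x₀ < o)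
    (step : ℕ → Ordinal → Ordinal) (hstep : ∀ n x, x < o → x < step n x ∧ step n x < o) :
    ∃ z : ℕ → Ordinal, z 0 = x₀ ∧ (∀ n, step n (z n) ≤ z (n + 1)) ∧ (∀ n, z n < o) ∧
      ∀ β < o, ∃ n, β < z n := by
  obtain ⟨f, hf⟩ := ho.exists_eq_range ⟨x₀, hx₀⟩
  have hf_lt : ∀ n, f n < o := fun n => (hf ▸ mem_range_self n : f n ∈ Iio o)
  let z : ℕ → Ordinal := fun n => Nat.rec x₀ (fun m zm => max (step m zm) (f m)) n
  have hz_succ : ∀ n, z (n + 1) = max (step n (z n)) (f n) := fun _ => rfl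
  have hz_lt : ∀ n, z n < o := by
    intro n
    induction n with
    | zero => exact hx₀
    | succ m ih => exact hz_succ m ▸ max_lt (hstep m _ ih).2 (hf_lt m)
  refine ⟨z, rfl, fun n => hz_succ n ▸ le_max_left _ _, hz_lt, fun β hβ => ?_⟩
  obtain ⟨n, rfl⟩ : β ∈ range f := hf ▸ hβ
  refine ⟨n + 2, (hz_succ n ▸ le_max_right _ _ : f n ≤ z (n + 1)).trans_lt ?_⟩
  rw [hz_succ (n + 1)]
  exact (hstep (n + 1) _ (hz_lt (n + 1))).1.trans_le (le_max_left _ _)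

theorem StrictMono.exists_index_of_cofinal {α : Type*} [LinearOrder α] {z : ℕ → α}
    (hz : StrictMono z) {ξ : α} (hcof : ∀ β < ξ, ∃ n, β < z n) :
    ∃ N : α → ℕ, ∀ ζ, z 0 < ζ → ζ < ξ → ∀ n, N ζ = n ↔ z n < ζ ∧ ζ ≤ z (n + 1) := by
  classical
  have hex : ∀ ζ, z 0 < ζ → ζ < ξ → ∃ n, z n < ζ ∧ ζ ≤ z (n + 1) := by
    intro ζ hζ₀ hζ
    have hP : ∃ n, ζ ≤ z n := (hcof ζ hζ).imp fun _ => le_of_lt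
    obtain ⟨n, hn⟩ : ∃ n, Nat.find hP = n + 1 :=
      Nat.exists_eq_succ_of_ne_zero fun h0 => (Nat.find_spec hP).not_gt (h0 ▸ hζ₀)
    refine ⟨n, not_le.1 (Nat.find_min hP (by omega)), hn ▸ Nat.find_spec hP⟩
  have huniq : ∀ ζ n m, z n < ζ → ζ ≤ z (n + 1) → z m < ζ → ζ ≤ z (m + 1) → n ≤ m :=
    fun ζ n m hn _ _ hm' => not_lt.1 fun hmn =>
      (hm'.trans (hz.monotone (Nat.succ_le_of_lt hmn))).not_gt hn
  choose! N hN using hex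
  refine ⟨N, fun ζ hζ₀ hζ n => ⟨?_, fun hn => ?_⟩⟩
  · rintro rfl
    exact hN ζ hζ₀ hζ
  · obtain ⟨hN₁, hN₂⟩ := hN ζ hζ₀ hζ
    exact le_antisymm (huniq ζ _ _ hN₁ hN₂ hn.1 hn.2) (huniq ζ _ _ hn.1 hn.2 hN₁ hN₂)

theorem Order.IsNormal.exists_mem_Ioo_lt {α β : Type*} [LinearOrder α] [SuccOrder α]
    [LinearOrder β] {f : α → β} (hf : IsNormal f) {a μ : α} (hμ : IsSuccLimit μ) (ha : a < μ)
    {b : β} (hb : b < f μ) : ∃ ζ ∈ Ioo a μ, b < f ζ := by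
  obtain ⟨ζ, hζμ, hbζ⟩ := (hf.lt_iff_exists_lt hμ).1 hb
  refine ⟨max ζ (succ a), ⟨?_, max_lt hζμ (hμ.succ_lt ha)⟩, hbζ.trans_le (hf.monotone ?_)⟩
  · exact (lt_succ_of_not_isMax (not_isMax_of_lt ha)).trans_le (le_max_right _ _)
  · exact le_max_left _ _

structure IsNormalIccMap (h : Ordinal.{u} → Ordinal.{v}) (ξ₀ ξ : Ordinal.{u})
    (α δ : Ordinal.{v}) : Prop where
  strictMonoOn : StrictMonoOn h (Icc ξ₀ ξ)
  isLUB : ∀ μ ∈ Ioc ξ₀ ξ, IsSuccLimit μ → IsLUB (h '' Ico ξ₀ μ) (h μ)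
  left : h ξ₀ = α
  right : h ξ = δ

theorem IsNormalIccMap.mem_Icc {h : Ordinal.{u} → Ordinal.{v}} {ξ₀ ξ : Ordinal.{u}}
    {α δ : Ordinal.{v}} (hh : IsNormalIccMap h ξ₀ ξ α δ) {ζ : Ordinal.{u}} (hζ : ζ ∈ Icc ξ₀ ξ) :
    h ζ ∈ Icc α δ := by
  have hξ : ξ ∈ Icc ξ₀ ξ := ⟨hζ.1.trans hζ.2, le_rfl⟩
  rw [← hh.left, ← hh.right]
  exact ⟨hh.strictMonoOn.monotoneOn ⟨le_rfl, hξ.1⟩ hζ hζ.1, hh.strictMonoOn.monotoneOn hζ hξ hζ.2⟩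

theorem IsNormalIccMap.exists_of_lift {H : Ordinal.{u} → Ordinal.{max v w}} {ξ₀ ξ : Ordinal.{u}}
    {α δ : Ordinal.{v}} (hH : IsNormalIccMap H ξ₀ ξ (lift.{w} α) (lift.{w} δ)) :
    ∃ h : Ordinal.{u} → Ordinal.{v}, IsNormalIccMap h ξ₀ ξ α δ := by
  have h_lift : ∀ ζ ∈ Icc ξ₀ ξ, lift.{w} (Function.invFun lift.{w} (H ζ)) = H ζ :=
    fun ζ hζ => Function.invFun_eq (mem_range_lift_of_le (hH.mem_Icc hζ).2)
  have h_invFun_lift : ∀ a : Ordinal.{v}, Function.invFun lift.{w} (lift.{w} a) = a :=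
    Function.leftInverse_invFun fun _ _ => lift_inj.1
  refine ⟨fun ζ => Function.invFun lift.{w} (H ζ), ?_, fun μ hμ hlim => ?_, ?_, ?_⟩
  · intro a ha b hb hab
    rw [← lift_lt.{w}, h_lift a ha, h_lift b hb]
    exact hH.strictMonoOn ha hb hab
  · refine IsLUB.of_image (f := lift.{w}) lift_le ?_
    rw [image_image, h_lift μ (Ioc_subset_Icc_self hμ),
      image_congr fun ζ hζ => h_lift ζ ⟨hζ.1, hζ.2.le.trans hμ.2⟩]
    exact hH.isLUB μ hμ hlim
  · simp only [hH.left, h_invFun_lift]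
  · simp only [hH.right, h_invFun_lift]

theorem isNormalIccMap_ite {ξ₀ ξ : Ordinal.{u}} {α δ : Ordinal.{v}} {G : Ordinal.{u} → Ordinal.{v}}
    (hlt : ξ₀ < ξ) (hαδ : α < δ) (hG_mem : ∀ ζ ∈ Ioo ξ₀ ξ, G ζ ∈ Ioo α δ)
    (hG_mono : StrictMonoOn G (Ioo ξ₀ ξ))
    (hG_lim : ∀ μ ∈ Ioo ξ₀ ξ, IsSuccLimit μ → ∀ β < G μ, ∃ ζ ∈ Ioo ξ₀ μ, β < G ζ)
    (hG_cof : IsSuccLimit ξ → ∀ β < δ, ∃ ζ ∈ Ioo ξ₀ ξ, β < G ζ) :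
    IsNormalIccMap (fun ζ => if ζ ≤ ξ₀ then α else if ζ < ξ then G ζ else δ) ξ₀ ξ α δ := by
  set h := fun ζ => if ζ ≤ ξ₀ then α else if ζ < ξ then G ζ else δ with h_def
  have h_left : h ξ₀ = α := if_pos le_rfl
  have h_right : h ξ = δ := by simp [h_def, hlt.not_ge]
  have h_mid : ∀ ζ ∈ Ioo ξ₀ ξ, h ζ = G ζ := fun ζ hζ => by simp [h_def, hζ.1.not_ge, hζ.2]
  have h_strictMonoOn : StrictMonoOn h (Icc ξ₀ ξ) := by
    intro ζ hζ ζ' hζ' hζζ'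
    rcases hζ.1.eq_or_lt with rfl | hζ₀
    · rcases hζ'.2.lt_or_eq with hζ'ξ | rfl
      · rw [h_left, h_mid ζ' ⟨hζζ', hζ'ξ⟩]
        exact (hG_mem ζ' ⟨hζζ', hζ'ξ⟩).1
      · rwa [h_left, h_right]
    · have hζξ : ζ < ξ := hζζ'.trans_le hζ'.2
      rw [h_mid ζ ⟨hζ₀, hζξ⟩]
      rcases hζ'.2.lt_or_eq with hζ'ξ | rfl
      · rw [h_mid ζ' ⟨hζ₀.trans hζζ', hζ'ξ⟩]
        exact hG_mono ⟨hζ₀, hζξ⟩ ⟨hζ₀.trans hζζ', hζ'ξ⟩ hζζ'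
      · rw [h_right]
        exact (hG_mem ζ ⟨hζ₀, hζξ⟩).2
  refine ⟨h_strictMonoOn, fun μ hμ hlim => ⟨?_, fun b hb => ?_⟩, h_left, h_right⟩
  · rintro _ ⟨ζ, hζ, rfl⟩
    exact (h_strictMonoOn ⟨hζ.1, hζ.2.le.trans hμ.2⟩ (Ioc_subset_Icc_self hμ) hζ.2).le
  · by_contra! hbμ
    obtain ⟨ζ, hζ, hbζ⟩ : ∃ ζ ∈ Ioo ξ₀ μ, b < G ζ := by
      rcases hμ.2.lt_or_eq with hμξ | rfl
      · exact hG_lim μ ⟨hμ.1, hμξ⟩ hlim b (h_mid μ ⟨hμ.1, hμξ⟩ ▸ hbμ)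
      · exact hG_cof hlim b (h_right ▸ hbμ)
    have hζ_mem : h ζ ∈ h '' Ico ξ₀ μ := ⟨ζ, ⟨hζ.1.le, hζ.2⟩, rfl⟩
    exact (hb hζ_mem).not_gt (h_mid ζ ⟨hζ.1, hζ.2.trans_le hμ.2⟩ ▸ hbζ)

theorem strictMonoOn_blockwise_add {s : Set Ordinal.{u}} {F : Ordinal.{u} → Ordinal.{v}}
    {z : ℕ → Ordinal.{u}} {d : ℕ → Ordinal.{v}} {N : Ordinal.{u} → ℕ} (hF : StrictMono F)
    (hF_pos : ∀ ζ ∈ s, 0 < F ζ) (hz : Monotone z) (hd : Monotone d)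
    (hd_step : ∀ n, d n + F (z (n + 1)) ≤ d (n + 1))
    (hN : ∀ ζ ∈ s, z (N ζ) < ζ ∧ ζ ≤ z (N ζ + 1)) :
    StrictMonoOn (fun ζ => d (N ζ) + F ζ) s := by
  intro ζ hζ ζ' hζ' hζζ'
  have hN_le : N ζ ≤ N ζ' := not_lt.1 fun hlt =>
    (((hN ζ' hζ').2.trans (hz (Nat.succ_le_of_lt hlt))).trans_lt (hN ζ hζ).1).not_gt hζζ'
  rcases hN_le.lt_or_eq with hNlt | hNeq
  · calc d (N ζ) + F ζ ≤ d (N ζ) + F (z (N ζ + 1)) :=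
          add_le_add_right (hF.monotone (hN ζ hζ).2) _
      _ ≤ d (N ζ + 1) := hd_step _
      _ ≤ d (N ζ') := hd hNlt
      _ < d (N ζ') + F ζ' := lt_add_of_pos_right _ (hF_pos ζ' hζ')
  · simp only [hNeq]
    exact add_lt_add_right (hF hζζ') _

section Construction

variable {F : Ordinal.{u} → Ordinal.{v}} {ξ₀ ξ : Ordinal.{u}} {α δ : Ordinal.{v}}

theorem exists_isNormalIccMap_of_not_isSuccLimit (hF : IsNormal F) (hξ : ¬IsSuccLimit ξ)
    (hlt : ξ₀ < ξ) (hαδ : α < δ) (habs : ∀ d < δ, ∀ ζ < ξ, d + F ζ < δ) :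
    ∃ h, IsNormalIccMap h ξ₀ ξ α δ :=
  ⟨_, isNormalIccMap_ite (G := fun ζ => α + F ζ) hlt hαδ
    (fun ζ hζ => ⟨lt_add_of_pos_right α (pos_of_gt (hF.strictMono hζ.1)), habs α hαδ ζ hζ.2⟩)
    (fun _ _ _ _ hζζ' => add_lt_add_right (hF.strictMono hζζ') α)
    (fun _ hμ hlim _ hβ => ((isNormal_add_right α).comp hF).exists_mem_Ioo_lt hlim hμ.1 hβ)
    (fun hlim => absurd hlim hξ)⟩

theorem exists_isNormalIccMap_of_isSuccLimit (hF : IsNormal F) (hξ : (Iio ξ).Countable)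
    (hδ : (Iio δ).Countable) (hlim : IsSuccLimit ξ) (hlt : ξ₀ < ξ) (hαδ : α < δ)
    (habs : ∀ d < δ, ∀ ζ < ξ, d + F ζ < δ) : ∃ h, IsNormalIccMap h ξ₀ ξ α δ := by
  obtain ⟨z, hz0, hz_step, hz_lt, hz_cof⟩ := exists_seq_cofinal hξ hlt (fun _ => succ)
    fun _ _ hx => ⟨lt_succ _, hlim.succ_lt hx⟩
  have hz : StrictMono z := strictMono_nat_of_lt_succ fun n => (lt_succ _).trans_le (hz_step n)
  have hF_pos : ∀ ζ, ξ₀ < ζ → 0 < F ζ := fun _ hζ => pos_of_gt (hF.strictMono hζ)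
  obtain ⟨d, hd0, hd_step, hd_lt, hd_cof⟩ := exists_seq_cofinal hδ hαδ
    (fun n x => x + F (z (n + 1)))
    fun n x hx => ⟨lt_add_of_pos_right x (hF_pos _ (hz0 ▸ hz n.succ_pos)), habs x hx _ (hz_lt _)⟩
  have hd : Monotone d := monotone_nat_of_le_succ fun n => le_self_add.trans (hd_step n)
  obtain ⟨N, hN⟩ := hz.exists_index_of_cofinal hz_cof
  rw [hz0] at hN
  have hN_block : ∀ ζ ∈ Ioo ξ₀ ξ, z (N ζ) < ζ ∧ ζ ≤ z (N ζ + 1) :=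
    fun ζ hζ => (hN ζ hζ.1 hζ.2 _).1 rfl
  refine ⟨_, isNormalIccMap_ite (G := fun ζ => d (N ζ) + F ζ) hlt hαδ ?_ ?_ ?_ ?_⟩
  · intro ζ hζ
    refine ⟨?_, habs _ (hd_lt _) ζ hζ.2⟩
    calc α = d 0 := hd0.symm
      _ ≤ d (N ζ) := hd (Nat.zero_le _)
      _ < d (N ζ) + F ζ := lt_add_of_pos_right _ (hF_pos ζ hζ.1)
  · exact strictMonoOn_blockwise_add hF.strictMono (fun ζ hζ => hF_pos ζ hζ.1) hz.monotone hd
      hd_step hN_block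
  · intro μ hμ hμlim β hβ
    have hblock := hN_block μ hμ
    obtain ⟨ζ, hζ, hβζ⟩ :=
      ((isNormal_add_right (d (N μ))).comp hF).exists_mem_Ioo_lt hμlim hblock.1 hβ
    have hξ₀ζ : ξ₀ < ζ := by
      rw [← hz0]
      exact (hz.monotone (Nat.zero_le _)).trans_lt hζ.1
    have hNζ : N ζ = N μ :=
      (hN ζ hξ₀ζ (hζ.2.trans hμ.2) _).2 ⟨hζ.1, hζ.2.le.trans hblock.2⟩
    refine ⟨ζ, ⟨hξ₀ζ, hζ.2⟩, ?_⟩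
    show β < d (N ζ) + F ζ
    rwa [hNζ]
  · intro _ β hβ
    obtain ⟨n, hn⟩ := hd_cof β hβ
    have hξ₀z : ξ₀ < z (n + 1) := hz0 ▸ hz n.succ_pos
    have hNz : N (z (n + 1)) = n := (hN _ hξ₀z (hz_lt _) n).2 ⟨hz n.lt_succ_self, le_rfl⟩
    refine ⟨z (n + 1), ⟨hξ₀z, hz_lt _⟩, hn.trans_le ?_⟩
    show d n ≤ d (N (z (n + 1))) + F (z (n + 1))
    rw [hNz]
    exact le_self_add

theorem exists_isNormalIccMap (hF : IsNormal F) (hξ : (Iio ξ).Countable)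
    (hδ : (Iio δ).Countable) (hlt : ξ₀ < ξ) (hαδ : α < δ)
    (habs : ∀ d < δ, ∀ ζ < ξ, d + F ζ < δ) : ∃ h, IsNormalIccMap h ξ₀ ξ α δ := by
  by_cases hlim : IsSuccLimit ξ
  · exact exists_isNormalIccMap_of_isSuccLimit hF hξ hδ hlim hlt hαδ habs
  · exact exists_isNormalIccMap_of_not_isSuccLimit hF hlim hlt hαδ habs

end Construction

theorem isNormal_omega0_opow_lift : IsNormal fun ζ : Ordinal.{u} => ω ^ lift.{v} ζ := by
  simpa only [Function.comp_def, liftInitialSeg_coe] using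
    (isNormal_opow one_lt_omega0).comp liftInitialSeg.isNormal

theorem stmt1_general (ξ : Ordinal) (hξ : ξ < omega1) (s : Finset Ordinal) (g : Ordinal → Ordinal)
    (hran : ∀ ζ ∈ s, g ζ < omega1)
    (hmono : ∀ ζ ∈ s, ∀ ζ' ∈ s, ζ < ζ' → g ζ < g ζ')
    (hrank : ∀ ζ ∈ s, rankGE (Set.Iio (g ζ)) (g ζ) ζ)
    (hξs : ξ ∈ s)
    (ξ₀ : Ordinal) (hξ₀s : ξ₀ ∈ s) (hξ₀lt : ξ₀ < ξ) :
    ∃ h : Ordinal → Ordinal,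
      (∀ ζ, ξ₀ ≤ ζ → ζ ≤ ξ → g ξ₀ ≤ h ζ ∧ h ζ ≤ g ξ) ∧
      (∀ ζ ζ', ξ₀ ≤ ζ → ζ < ζ' → ζ' ≤ ξ → h ζ < h ζ') ∧
      (∀ δ, ξ₀ < δ → δ ≤ ξ → Order.IsSuccLimit δ → h δ = sSup (h '' Set.Ico ξ₀ δ)) ∧
      h ξ₀ = g ξ₀ ∧ h ξ = g ξ := by
  -- `ξ` and `g ξ` may live in different universes, so `h` is first built in their maximum.
  have hdvd := omega0_opow_dvd_of_rankGE (hrank ξ hξs)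
  have hδ : lift.{u_1} (g ξ) < omega1 := lift_omega1 ▸ lift_lt.2 (hran ξ hξs)
  obtain ⟨H, hH⟩ := exists_isNormalIccMap isNormal_omega0_opow_lift
    (countable_Iio_of_lt_omega1 hξ) (countable_Iio_of_lt_omega1 hδ) hξ₀lt
    (lift_lt.2 (hmono ξ₀ hξ₀s ξ hξs hξ₀lt)) fun d hd ζ hζ =>
      (add_lt_add_right (isNormal_omega0_opow_lift.strictMono hζ) d).trans_le
        (add_omega0_opow_le_of_dvd hdvd hd)
  obtain ⟨h, hh⟩ := hH.exists_of_lift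
  refine ⟨h, fun ζ h₁ h₂ => hh.mem_Icc ⟨h₁, h₂⟩,
    fun ζ ζ' h₁ h₂ h₃ => hh.strictMonoOn ⟨h₁, h₂.le.trans h₃⟩ ⟨h₁.trans h₂.le, h₃⟩ h₂,
    fun μ h₁ h₂ hlim => ((hh.isLUB μ ⟨h₁, h₂⟩ hlim).csSup_eq ⟨h ξ₀, ξ₀, ⟨le_rfl, h₁⟩, rfl⟩).symm,
    hh.left, hh.right⟩

/-- if `g` is a finite strictly increasing partial function (domain `s`)
with `ξ ∈ s`, `rank(g ζ, g ζ) ≥ ζ` for all `ζ ∈ s`, and `ξ₀ = max (s ∩ ξ)` exists,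
then there is a strictly increasing continuous `h : [ξ₀, ξ] → [g ξ₀, g ξ]` with
`h ξ₀ = g ξ₀` and `h ξ = g ξ`. -/
theorem stmt1 (ξ : Ordinal) (hξ : ξ < omega1) (s : Finset Ordinal) (g : Ordinal → Ordinal)
    (hdom : ∀ ζ ∈ s, ζ < omega1) (hran : ∀ ζ ∈ s, g ζ < omega1)
    (hmono : ∀ ζ ∈ s, ∀ ζ' ∈ s, ζ < ζ' → g ζ < g ζ')
    (hrank : ∀ ζ ∈ s, rankGE (Set.Iio (g ζ)) (g ζ) ζ)
    (hξs : ξ ∈ s)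
    (ξ₀ : Ordinal) (hξ₀s : ξ₀ ∈ s) (hξ₀lt : ξ₀ < ξ)
    (hmax : ∀ ζ ∈ s, ζ < ξ → ζ ≤ ξ₀) :
    ∃ h : Ordinal → Ordinal,
      (∀ ζ, ξ₀ ≤ ζ → ζ ≤ ξ → g ξ₀ ≤ h ζ ∧ h ζ ≤ g ξ) ∧
      (∀ ζ ζ', ξ₀ ≤ ζ → ζ < ζ' → ζ' ≤ ξ → h ζ < h ζ') ∧
      (∀ δ, ξ₀ < δ → δ ≤ ξ → Order.IsSuccLimit δ → h δ = sSup (h '' Set.Ico ξ₀ δ)) ∧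
      h ξ₀ = g ξ₀ ∧ h ξ = g ξ :=
  stmt1_general ξ hξ s g hran hmono hrank hξs ξ₀ hξ₀s hξ₀lt
end
end

section
/- For every countable ordinal ξ, the set {δ < ω₁ : rank(δ, δ) ≥ ξ} is a club in ω₁. -/
noncomputable section

open Set

universe u v w

open Ordinal in
lemma rankGE_mono {X : Set Ordinal.{u}} {δ : Ordinal.{u}} {μ ν : Ordinal.{v}} (h : ν ≤ μ)
    (hμ : rankGE X δ μ) : rankGE X δ ν := by
  rw [rankGE] at hμ ⊢
  exact fun η hη => hμ η (hη.trans_le h)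

open Ordinal in
lemma rankGE_transfer : ∀ (η : Ordinal.{v}) (δ δ' ε : Ordinal.{u}), ε ≤ δ → ε ≤ δ' →
    rankGE (Set.Iio δ) ε η → rankGE (Set.Iio δ') ε η := by
  intro η
  induction η using Ordinal.induction with
  | h η IH =>
    intro δ δ' ε hd hd' h
    rw [rankGE] at h ⊢
    intro η' hη'
    obtain ⟨h0, h1⟩ := h η' hη'
    refine ⟨fun he β hβ => ?_, fun he β hβ => ?_⟩
    · obtain ⟨x, hx, hbx, hxe⟩ := h0 he β hβ
      exact ⟨x, Set.mem_Iio.2 (hxe.trans_le hd'), hbx, hxe⟩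
    · obtain ⟨ε', h1', h2', h3'⟩ := h1 he β hβ
      exact ⟨ε', h1', h2', IH η' hη' δ δ' ε' (h2'.le.trans hd) (h2'.le.trans hd') h3'⟩

open Ordinal in
lemma rankGE_lift : ∀ (μ' : Ordinal.{w}) (μ : Ordinal.{v}) (X : Set Ordinal.{u}) (δ : Ordinal.{u}),
    Ordinal.lift.{w} μ = Ordinal.lift.{v} μ' → rankGE X δ μ → rankGE X δ μ' := by
  intro μ'
  induction μ' using Ordinal.induction with
  | h μ' IH =>
    intro μ X δ heq h
    rw [rankGE] at h ⊢
    intro η' hη'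
    have h1 : Ordinal.lift.{v} η' < Ordinal.lift.{w} μ := by
      rw [heq]; exact Ordinal.lift_lt.2 hη'
    obtain ⟨η, hημ, hηeq⟩ := Ordinal.lt_lift_iff.1 h1
    obtain ⟨h0, hrec⟩ := h η hημ
    refine ⟨fun he => ?_, fun he β hβ => ?_⟩
    · refine h0 (Ordinal.lift_inj.1 ?_)
      rw [hηeq, he, Ordinal.lift_zero, Ordinal.lift_zero]
    · have hne : η ≠ 0 := by
        intro h'
        refine he (Ordinal.lift_inj.1 ?_)
        rw [← hηeq, h', Ordinal.lift_zero, Ordinal.lift_zero]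
      obtain ⟨ε, hε1, hε2, hε3⟩ := hrec hne β hβ
      exact ⟨ε, hε1, hε2, IH η' hη' η X ε hηeq hε3⟩

open Ordinal in
lemma rankGE_of_dvd : ∀ η δ : Ordinal.{u}, δ ≠ 0 → (omega0 ^ η ∣ δ) →
    rankGE (Set.Iio δ) δ η := by
  intro η
  induction η using Ordinal.induction with
  | h η IH =>
    intro δ hδ0 hdvd
    rw [rankGE]
    intro η' hη'
    have hη0 : η ≠ 0 := fun h => (zero_le (a := η')).not_gt (h ▸ hη')
    have hωdvd : omega0 ∣ δ := dvd_trans (by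
      conv_lhs => rw [← Ordinal.opow_one omega0]
      exact Ordinal.opow_dvd_opow omega0 (Ordinal.one_le_iff_ne_zero.2 hη0)) hdvd
    have hlim : Order.IsSuccLimit δ := Ordinal.isSuccLimit_iff_omega0_dvd.2 ⟨hδ0, hωdvd⟩
    constructor
    · intro _ β hβ
      exact ⟨Order.succ β, Set.mem_Iio.2 (hlim.succ_lt hβ), Order.lt_succ β, hlim.succ_lt hβ⟩
    · intro hne β hβ
      set b := omega0 ^ η' with hb
      have hb0 : b ≠ 0 := Ordinal.opow_ne_zero η' Ordinal.omega0_ne_zero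
      obtain ⟨m, hm⟩ := hdvd
      have hm0 : m ≠ 0 := by rintro rfl; exact hδ0 (by simp [hm])
      have hζ0 : η - η' ≠ 0 := by
        intro h
        have := Ordinal.add_sub_cancel_of_le hη'.le
        rw [h, add_zero] at this
        exact hη'.ne this
      have hδeq : δ = b * (omega0 ^ (η - η') * m) := by
        rw [hm, ← mul_assoc, hb, ← Ordinal.opow_add, Ordinal.add_sub_cancel_of_le hη'.le]
      set m' := omega0 ^ (η - η') * m with hm'
      have hm'lim : Order.IsSuccLimit m' :=
        Ordinal.isSuccLimit_mul_left (Ordinal.isSuccLimit_opow_left Ordinal.isSuccLimit_omega0 hζ0)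
          (pos_iff_ne_zero.2 hm0)
      have hq : β / b < m' := by rw [Ordinal.div_lt hb0, ← hδeq]; exact hβ
      have hεlt : b * Order.succ (β / b) < δ := by
        rw [hδeq]
        exact mul_lt_mul_of_pos_left (hm'lim.succ_lt hq)
          (Ordinal.opow_pos _ Ordinal.omega0_pos)
      refine ⟨b * Order.succ (β / b), Ordinal.lt_mul_succ_div β hb0, hεlt, ?_⟩
      refine rankGE_transfer η' _ δ _ le_rfl hεlt.le ?_
      exact IH η' hη' _ (_root_.mul_ne_zero hb0 (Order.succ_ne_bot _)) ⟨_, rfl⟩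

open Ordinal in
lemma card_le_aleph0_of_lt_omega1 {δ : Ordinal.{u}} (h : δ < omega1.{u}) :
    δ.card ≤ Cardinal.aleph0 := by
  have := Cardinal.lt_ord.1 h
  rw [← Cardinal.succ_aleph0, Order.lt_succ_iff] at this
  exact this

open Ordinal in
lemma opow_lt_omega1 : ∀ ξ : Ordinal.{u}, ξ < omega1.{u} → omega0 ^ ξ < omega1.{u} := by
  intro ξ
  induction ξ using Ordinal.limitRecOn with
  | zero =>
    intro _
    rw [Ordinal.opow_zero, omega1, Cardinal.lt_ord]
    simpa using Cardinal.aleph0_lt_aleph_one.trans_le' (by simp)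
  | add_one ξ IH =>
    intro hξ
    have hξ' : ξ < omega1 := (lt_add_one ξ).trans hξ
    rw [Ordinal.opow_add_one, omega1, Cardinal.lt_ord, Ordinal.card_mul]
    refine Cardinal.mul_lt_of_lt (Cardinal.aleph0_le_aleph 1) ?_ ?_
    · exact Cardinal.lt_ord.1 (IH hξ')
    · rw [Ordinal.card_omega0]
      exact Cardinal.aleph0_lt_aleph_one
  | limit ξ hlim IH =>
    intro hξ
    have hcnt : Countable ξ.ToType := by
      rw [← Cardinal.mk_le_aleph0_iff, Cardinal.mk_toType]
      exact card_le_aleph0_of_lt_omega1 hξ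
    set f : ξ.ToType → Ordinal.{u} :=
      fun i => omega0 ^ ((Ordinal.ToType.mk (o := ξ)).symm i : Ordinal) with hf
    have hle : omega0 ^ ξ ≤ iSup f := by
      rw [Ordinal.opow_le_of_isSuccLimit Ordinal.omega0_ne_zero hlim]
      intro b hb
      have hfb : omega0 ^ b = f (Ordinal.ToType.mk (o := ξ) ⟨b, hb⟩) := by simp [hf]
      rw [hfb]
      exact Ordinal.le_iSup f _
    refine hle.trans_lt ?_
    rw [omega1, Cardinal.ord_aleph]
    refine Ordinal.iSup_lt_omega_one fun i => ?_
    rw [← Cardinal.ord_aleph, ← omega1]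
    exact IH _ (Set.mem_Iio.1 ((Ordinal.ToType.mk (o := ξ)).symm i).2)
      ((Set.mem_Iio.1 ((Ordinal.ToType.mk (o := ξ)).symm i).2).trans hξ)

open Ordinal in
lemma omega1_eq_lift : omega1.{u} = Ordinal.lift.{u, 0} omega1.{0} := by
  rw [omega1, omega1, Cardinal.lift_ord, Cardinal.lift_aleph, Ordinal.lift_one]

open Ordinal in
lemma stmt11_aux (ξ : Ordinal.{u}) (hξ : ξ < omega1.{u}) :
    IsClubW1.{u} {δ | δ < omega1 ∧ rankGE (Set.Iio δ) δ ξ} := by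
  refine ⟨fun δ hδ => hδ.1, ?_, ?_⟩
  · intro α hα
    have hωξ : omega0 ^ ξ ≠ 0 := Ordinal.opow_ne_zero ξ Ordinal.omega0_ne_zero
    refine ⟨omega0 ^ ξ * Order.succ α, ⟨?_, ?_⟩, ?_⟩
    · rw [omega1, Cardinal.lt_ord, Ordinal.card_mul]
      refine Cardinal.mul_lt_of_lt (Cardinal.aleph0_le_aleph 1) ?_ ?_
      · exact Cardinal.lt_ord.1 (opow_lt_omega1 ξ hξ)
      · refine Cardinal.lt_ord.1 ?_
        exact (Cardinal.isSuccLimit_ord (Cardinal.aleph0_le_aleph 1)).succ_lt hα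
    · exact rankGE_of_dvd ξ _ (_root_.mul_ne_zero hωξ (Order.succ_ne_bot α)) ⟨Order.succ α, rfl⟩
    · calc α < Order.succ α := Order.lt_succ α
        _ ≤ omega0 ^ ξ * Order.succ α :=
          Ordinal.le_mul_right _ (Ordinal.opow_pos ξ Ordinal.omega0_pos)
  · intro δ hδ hlp
    refine ⟨hδ, ?_⟩
    rw [rankGE]
    intro η hη
    constructor
    · intro _ β hβ
      obtain ⟨ε, hεC, hβε, hεδ⟩ := hlp β hβ
      exact ⟨ε, Set.mem_Iio.2 hεδ, hβε, hεδ⟩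
    · intro _ β hβ
      obtain ⟨ε, hεC, hβε, hεδ⟩ := hlp β hβ
      exact ⟨ε, hβε, hεδ,
        rankGE_transfer η ε δ ε le_rfl hεδ.le (rankGE_mono hη.le hεC.2)⟩

open Ordinal in
lemma stmt11_aux2 (ξ₀ : Ordinal.{0}) (h : ξ₀ < omega1.{0}) :
    IsClubW1.{u} {δ | δ < omega1 ∧ rankGE (Set.Iio δ) δ (Ordinal.lift.{v, 0} ξ₀)} := by
  have hset : {δ : Ordinal.{u} | δ < omega1 ∧ rankGE (Set.Iio δ) δ (Ordinal.lift.{v, 0} ξ₀)}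
      = {δ : Ordinal.{u} | δ < omega1 ∧ rankGE (Set.Iio δ) δ (Ordinal.lift.{u, 0} ξ₀)} := by
    ext δ
    exact and_congr_right fun _ =>
      ⟨rankGE_lift _ _ _ _ (by rw [Ordinal.lift_lift, Ordinal.lift_lift]),
       rankGE_lift _ _ _ _ (by rw [Ordinal.lift_lift, Ordinal.lift_lift])⟩
  rw [hset]
  exact stmt11_aux _ (by rw [omega1_eq_lift]; exact Ordinal.lift_lt.2 h)

/-- for every countable ordinal `ξ`, the set of `δ < ω₁` with
`rank(δ, δ) ≥ ξ` is a club in `ω₁`. -/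
theorem stmt11 (ξ : Ordinal) (hξ : ξ < omega1) :
    IsClubW1 {δ | δ < omega1 ∧ rankGE (Set.Iio δ) δ ξ} := by
  rw [omega1_eq_lift] at hξ
  obtain ⟨ξ₀, hξ₀lt, rfl⟩ := Ordinal.lt_lift_iff.1 hξ
  exact stmt11_aux2 ξ₀ hξ₀lt
end
end
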